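/- arXiv:1305.5311 — 2 statements merged into one kernel-verified Lean document; each statement's English description precedes it below -/
import Mathlib

section
/- Let X = Xᵀ and Y = Yᵀ in ℝ^{n×n} satisfy ker R_X ⊆ ker S_X and ker R_Y ⊆ ker S_Y, and let Δ := X − Y. Then ker R_X ⊆ ker (A_Yᵀ Δ B), i.e., A_Yᵀ (X − Y) B v = 0 for every v ∈ ℝ^m with R_X v = 0. -/
open Matrix

-- The Moore–Penrose pseudoinverse of a real matrix, characterised by the four
-- Penrose equations (it exists and is unique for every real matrix).
open Classical in
noncomputable def mpinv {α β : Type*} [Fintype α] [Fintype β]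
    (M : Matrix α β ℝ) : Matrix β α ℝ :=
  if h : ∃ P : Matrix β α ℝ,
      M * P * M = M ∧ P * M * P = P ∧ (M * P)ᵀ = M * P ∧ (P * M)ᵀ = P * M
  then h.choose else 0

/-- `R_X = R + BᵀXB`. -/
noncomputable def RX {ι κ : Type*} [Fintype ι] [Fintype κ]
    (R : Matrix κ κ ℝ) (B : Matrix ι κ ℝ) (X : Matrix ι ι ℝ) : Matrix κ κ ℝ :=
  R + Bᵀ * X * B

/-- `S_X = AᵀXB + S`. -/
noncomputable def SX {ι κ : Type*} [Fintype ι] [Fintype κ]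
    (A : Matrix ι ι ℝ) (B S : Matrix ι κ ℝ) (X : Matrix ι ι ℝ) : Matrix ι κ ℝ :=
  Aᵀ * X * B + S

/-- `K_X = R_X† S_Xᵀ`. -/
noncomputable def KX {ι κ : Type*} [Fintype ι] [Fintype κ]
    (A : Matrix ι ι ℝ) (B S : Matrix ι κ ℝ) (R : Matrix κ κ ℝ) (X : Matrix ι ι ℝ) :
    Matrix κ ι ℝ :=
  mpinv (RX R B X) * (SX A B S X)ᵀ

/-- The closed-loop matrix `A_X = A - B K_X`. -/
noncomputable def AX {ι κ : Type*} [Fintype ι] [Fintype κ]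
    (A : Matrix ι ι ℝ) (B S : Matrix ι κ ℝ) (R : Matrix κ κ ℝ) (X : Matrix ι ι ℝ) :
    Matrix ι ι ℝ :=
  A - B * KX A B S R X

/-- The kernel condition `ker R_X ⊆ ker S_X`. -/
def KerCond {ι κ : Type*} [Fintype ι] [Fintype κ]
    (A : Matrix ι ι ℝ) (B S : Matrix ι κ ℝ) (R : Matrix κ κ ℝ) (X : Matrix ι ι ℝ) : Prop :=
  ∀ v : κ → ℝ, (RX R B X).mulVec v = 0 → (SX A B S X).mulVec v = 0

/-- The Riccati operator `𝔇(X) = X - AᵀXA + S_X R_X† S_Xᵀ - Q`. -/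
noncomputable def DOp {ι κ : Type*} [Fintype ι] [Fintype κ]
    (A Q : Matrix ι ι ℝ) (B S : Matrix ι κ ℝ) (R : Matrix κ κ ℝ) (X : Matrix ι ι ℝ) :
    Matrix ι ι ℝ :=
  X - Aᵀ * X * A + SX A B S X * mpinv (RX R B X) * (SX A B S X)ᵀ - Q

/-- The Riccati map `ℛ(X) = AᵀXA - S_X R_X† S_Xᵀ + Q`. -/
noncomputable def Ricc {ι κ : Type*} [Fintype ι] [Fintype κ]
    (A Q : Matrix ι ι ℝ) (B S : Matrix ι κ ℝ) (R : Matrix κ κ ℝ) (X : Matrix ι ι ℝ) :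
    Matrix ι ι ℝ :=
  Aᵀ * X * A - SX A B S X * mpinv (RX R B X) * (SX A B S X)ᵀ + Q

/-- `X` is a symmetric solution of CGDARE(Σ): it is symmetric, satisfies the GDARE and
the kernel condition `ker R_X ⊆ ker S_X`. -/
def IsCGDARESolution {ι κ : Type*} [Fintype ι] [Fintype κ]
    (A Q : Matrix ι ι ℝ) (B S : Matrix ι κ ℝ) (R : Matrix κ κ ℝ) (X : Matrix ι ι ℝ) : Prop :=
  Xᵀ = X ∧ X = Ricc A Q B S R X ∧ KerCond A B S R X

/-- The matrix `N = [[A, 0, B], [Q, -I, S], [Sᵀ, 0, R]]` of the extended symplectic pencil. -/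
noncomputable def Nmat {n m : ℕ} (A Q : Matrix (Fin n) (Fin n) ℝ)
    (B S : Matrix (Fin n) (Fin m) ℝ) (R : Matrix (Fin m) (Fin m) ℝ) :
    Matrix (Fin n ⊕ (Fin n ⊕ Fin m)) (Fin n ⊕ (Fin n ⊕ Fin m)) ℝ :=
  fromBlocks A (fromCols 0 B) (fromRows Q Sᵀ) (fromBlocks (-1) S 0 R)

/-- The matrix `M = [[I, 0, 0], [0, -Aᵀ, 0], [0, -Bᵀ, 0]]` of the extended symplectic pencil. -/
noncomputable def Mmat {n m : ℕ} (A : Matrix (Fin n) (Fin n) ℝ)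
    (B : Matrix (Fin n) (Fin m) ℝ) :
    Matrix (Fin n ⊕ (Fin n ⊕ Fin m)) (Fin n ⊕ (Fin n ⊕ Fin m)) ℝ :=
  fromBlocks 1 0 0 (fromBlocks (-Aᵀ) 0 (-Bᵀ) 0)

/-! Since `R_Y` is symmetric, transposing the Penrose equation `R_Y R_Y† R_Y = R_Y` gives
`R_Y R_Y†ᵀ R_Y = R_Y`, so `I - R_Y†ᵀ R_Y` maps into `ker R_Y ⊆ ker S_Y`: `S_Y = S_Y R_Y†ᵀ R_Y`.
Expanding `A_Yᵀ = Aᵀ - S_Y R_Y†ᵀ Bᵀ` with `Aᵀ Δ B = S_X - S_Y` and `Bᵀ Δ B = R_X - R_Y` turns this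
into `A_Yᵀ Δ B = S_X - S_Y R_Y†ᵀ R_X`, and both terms vanish on `ker R_X ⊆ ker S_X`. -/

def IsMoorePenroseInverse {α β : Type*} [Fintype α] [Fintype β]
    (M : Matrix α β ℝ) (P : Matrix β α ℝ) : Prop :=
  M * P * M = M ∧ P * M * P = P ∧ (M * P)ᵀ = M * P ∧ (P * M)ᵀ = P * M

theorem exists_isMoorePenroseInverse_of_transpose_eq {κ : Type*} [Fintype κ]
    (M : Matrix κ κ ℝ) (hM : Mᵀ = M) : ∃ P, IsMoorePenroseInverse M P := by
  classical
  have hH : M.IsHermitian := hM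
  set φ := Unitary.conjStarAlgAut ℝ (Matrix κ κ ℝ) hH.eigenvectorUnitary
  set d := hH.eigenvalues
  have hM_eq : M = φ (diagonal d) := hH.spectral_theorem
  have transpose_φ_diagonal : ∀ e : κ → ℝ, (φ (diagonal e))ᵀ = φ (diagonal e) := fun e => by
    rw [← conjTranspose_eq_transpose_of_trivial, ← star_eq_conjTranspose, ← map_star,
      star_eq_conjTranspose, diagonal_conjTranspose, star_trivial]
  refine ⟨φ (diagonal fun i => (d i)⁻¹), ?_, ?_, ?_, ?_⟩
  · rw [hM_eq, ← map_mul, ← map_mul, diagonal_mul_diagonal, diagonal_mul_diagonal]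
    congr; ext i
    by_cases h : d i = 0 <;> field_simp [h]
  · rw [hM_eq, ← map_mul, ← map_mul, diagonal_mul_diagonal, diagonal_mul_diagonal]
    congr; ext i
    by_cases h : d i = 0 <;> field_simp [h]
  · rw [hM_eq, ← map_mul, diagonal_mul_diagonal, transpose_φ_diagonal]
  · rw [hM_eq, ← map_mul, diagonal_mul_diagonal, transpose_φ_diagonal]

theorem isMoorePenroseInverse_mpinv_of_transpose_eq {κ : Type*} [Fintype κ]
    (M : Matrix κ κ ℝ) (hM : Mᵀ = M) : IsMoorePenroseInverse M (mpinv M) := by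
  have h := exists_isMoorePenroseInverse_of_transpose_eq M hM
  unfold IsMoorePenroseInverse at h ⊢
  rw [mpinv, dif_pos h]
  exact h.choose_spec

theorem mul_transpose_mpinv_mul_of_transpose_eq {κ : Type*} [Fintype κ]
    (M : Matrix κ κ ℝ) (hM : Mᵀ = M) : M * (mpinv M)ᵀ * M = M := by
  simpa only [transpose_mul, hM, Matrix.mul_assoc] using
    congrArg transpose (isMoorePenroseInverse_mpinv_of_transpose_eq M hM).1

theorem mul_mul_eq_self_of_ker_le {𝕜 ι κ : Type*} [CommRing 𝕜] [Fintype κ]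
    {M P : Matrix κ κ 𝕜} {N : Matrix ι κ 𝕜} (hP : M * P * M = M)
    (hker : ∀ v, M *ᵥ v = 0 → N *ᵥ v = 0) : N * P * M = N := by
  rw [ext_iff_mulVec]
  intro v
  have hw : M *ᵥ (v - (P * M) *ᵥ v) = 0 := by
    rw [mulVec_sub, mulVec_mulVec, ← Matrix.mul_assoc, hP, sub_self]
  have := hker _ hw
  rwa [mulVec_sub, sub_eq_zero, mulVec_mulVec, ← Matrix.mul_assoc, eq_comm] at this

theorem transpose_RX {ι κ : Type*} [Fintype ι] [Fintype κ] {R : Matrix κ κ ℝ}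
    {X : Matrix ι ι ℝ} (hR : Rᵀ = R) (hX : Xᵀ = X) (B : Matrix ι κ ℝ) :
    (RX R B X)ᵀ = RX R B X := by
  simp only [RX, transpose_add, transpose_mul, transpose_transpose, hR, hX, Matrix.mul_assoc]

theorem transpose_AX_mul_sub_mul {ι κ : Type*} [Fintype ι] [Fintype κ]
    (A : Matrix ι ι ℝ) (B S : Matrix ι κ ℝ) (R : Matrix κ κ ℝ) (X Y : Matrix ι ι ℝ) :
    (AX A B S R Y)ᵀ * (X - Y) * B
      = SX A B S X - SX A B S Y - SX A B S Y * (mpinv (RX R B Y))ᵀ * (RX R B X - RX R B Y) := by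
  simp only [AX, KX, SX, RX, transpose_sub, transpose_mul, transpose_transpose,
    Matrix.sub_mul, Matrix.mul_sub, Matrix.add_mul, Matrix.mul_add, Matrix.mul_assoc]
  abel

theorem transpose_AX_mul_sub_mul_of_kerCond {ι κ : Type*} [Fintype ι] [Fintype κ]
    {A : Matrix ι ι ℝ} {B S : Matrix ι κ ℝ} {R : Matrix κ κ ℝ} (hR : Rᵀ = R)
    (X : Matrix ι ι ℝ) {Y : Matrix ι ι ℝ} (hY : Yᵀ = Y) (hkY : KerCond A B S R Y) :
    (AX A B S R Y)ᵀ * (X - Y) * B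
      = SX A B S X - SX A B S Y * (mpinv (RX R B Y))ᵀ * RX R B X := by
  have hSY : SX A B S Y * (mpinv (RX R B Y))ᵀ * RX R B Y = SX A B S Y :=
    mul_mul_eq_self_of_ker_le
      (mul_transpose_mpinv_mul_of_transpose_eq _ (transpose_RX hR hY B)) hkY
  rw [transpose_AX_mul_sub_mul, Matrix.mul_sub, hSY]
  abel

theorem stmt_7_general {n m : ℕ}
    (A Q : Matrix (Fin n) (Fin n) ℝ) (B S : Matrix (Fin n) (Fin m) ℝ)
    (R : Matrix (Fin m) (Fin m) ℝ)
    (hPi : (fromBlocks Q S Sᵀ R).PosSemidef)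
    (X Y : Matrix (Fin n) (Fin n) ℝ) (hY : Yᵀ = Y)
    (hkX : KerCond A B S R X) (hkY : KerCond A B S R Y) :
    ∀ v : Fin m → ℝ, (RX R B X).mulVec v = 0 →
      ((AX A B S R Y)ᵀ * (X - Y) * B).mulVec v = 0 := by
  intro v hv
  have hR : Rᵀ = R := (isHermitian_fromBlocks_iff.mp hPi.isHermitian).2.2.2
  rw [transpose_AX_mul_sub_mul_of_kerCond hR X hY hkY, sub_mulVec, hkX v hv,
    ← mulVec_mulVec, hv, mulVec_zero, sub_zero]

/-- `ker R_X ⊆ ker (A_Yᵀ Δ B)` with `Δ = X - Y`. -/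
theorem stmt_7 {n m : ℕ} (hn : 0 < n) (hm : 0 < m)
    (A Q : Matrix (Fin n) (Fin n) ℝ) (B S : Matrix (Fin n) (Fin m) ℝ)
    (R : Matrix (Fin m) (Fin m) ℝ)
    (hPi : (fromBlocks Q S Sᵀ R).PosSemidef)
    (X Y : Matrix (Fin n) (Fin n) ℝ) (hX : Xᵀ = X) (hY : Yᵀ = Y)
    (hkX : KerCond A B S R X) (hkY : KerCond A B S R Y) :
    ∀ v : Fin m → ℝ, (RX R B X).mulVec v = 0 →
      ((AX A B S R Y)ᵀ * (X - Y) * B).mulVec v = 0 :=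
  stmt_7_general A Q B S R hPi X Y hY hkX hkY
end

section
/- Let X∘ be a symmetric solution of CGDARE(Σ). Let T ≥ 1, let X_T, X_{T−1}, …, X_0 be symmetric matrices with X_t = ℛ(X_{t+1}) for 0 ≤ t ≤ T−1, and assume each X_t satisfies ker R_{X_t} ⊆ ker S_{X_t} (which holds in particular when every X_t is positive semidefinite). Set Δ_i := X_i − X∘ and F_i := A_{X∘}ᵀ (I_n − Δ_i B (R + Bᵀ X_i B)† Bᵀ). Then for every integer τ with 1 ≤ τ ≤ T, Δ_{T−τ} = F_{T−τ+1} F_{T−τ+2} ⋯ F_T · Δ_T · (A_{X∘})^τ. -/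
open Matrix

/-!
For any feedback `K` and any symmetric `Y` with `ker R_Y ⊆ ker S_Y`, completing the square
(using `S_Y R_Y† R_Y = S_Y`) gives
`ℛ(Y) = (A - BK)ᵀ Y (A - BK) + Q - SK - KᵀSᵀ + KᵀRK - (S_Y - KᵀR_Y) R_Y† (S_Y - KᵀR_Y)ᵀ`.
Take `K = K_{X∘}`. Then `S_{X∘} = Kᵀ R_{X∘}`, so at `Y = X∘` the last term vanishes, and for
general `Y` its middle factor is `S_Y - KᵀR_Y = A_{X∘}ᵀ (Y - X∘) B`. Subtracting the two instances
gives `ℛ(Y) - X∘ = A_{X∘}ᵀ (I - Δ B R_Y† Bᵀ) Δ A_{X∘}` with `Δ = Y - X∘`, which iterates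
backwards from `X_T` to the product formula.
-/

section Penrose

variable {α β ι : Type*} [Fintype α] [Fintype β]

def IsPenrose (M : Matrix α β ℝ) (P : Matrix β α ℝ) : Prop :=
  M * P * M = M ∧ P * M * P = P ∧ (M * P)ᵀ = M * P ∧ (P * M)ᵀ = P * M

theorem IsPenrose.transpose {M : Matrix α β ℝ} {P : Matrix β α ℝ} (h : IsPenrose M P) :
    IsPenrose Mᵀ Pᵀ := by
  obtain ⟨h₁, h₂, h₃, h₄⟩ := h
  refine ⟨?_, ?_, ?_, ?_⟩
  · rw [← transpose_mul, ← transpose_mul, ← Matrix.mul_assoc, h₁]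
  · rw [← transpose_mul, ← transpose_mul, ← Matrix.mul_assoc, h₂]
  · rw [← transpose_mul, transpose_transpose, h₄]
  · rw [← transpose_mul, transpose_transpose, h₃]

theorem IsPenrose.unique {M : Matrix α β ℝ} {P₁ P₂ : Matrix β α ℝ} (h₁ : IsPenrose M P₁)
    (h₂ : IsPenrose M P₂) : P₁ = P₂ := by
  obtain ⟨a₁, b₁, c₁, d₁⟩ := h₁
  obtain ⟨a₂, b₂, c₂, d₂⟩ := h₂
  have hMP : M * P₂ = M * P₁ :=
    calc M * P₂ = (M * P₁ * M * P₂)ᵀ := by rw [a₁, c₂]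
      _ = (M * P₂)ᵀ * (M * P₁)ᵀ := by rw [← transpose_mul, Matrix.mul_assoc]
      _ = M * P₂ * M * P₁ := by rw [c₁, c₂, ← Matrix.mul_assoc]
      _ = M * P₁ := by rw [a₂]
  have hPM : P₂ * M = P₁ * M :=
    calc P₂ * M = (P₂ * M * P₁ * M)ᵀ := by
          rw [Matrix.mul_assoc P₂ M P₁, Matrix.mul_assoc, a₁, d₂]
      _ = (P₁ * M)ᵀ * (P₂ * M)ᵀ := by rw [← transpose_mul, Matrix.mul_assoc]
      _ = P₁ * M := by rw [d₁, d₂, Matrix.mul_assoc, ← Matrix.mul_assoc M, a₂]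
  calc P₁ = P₂ * M * P₂ := by rw [hPM, Matrix.mul_assoc, hMP, ← Matrix.mul_assoc, b₁]
    _ = P₂ := b₂

theorem IsPenrose.mul_mul_eq_of_ker [DecidableEq β] {M : Matrix α β ℝ} {P : Matrix β α ℝ}
    (h : IsPenrose M P) {G : Matrix ι β ℝ} (hG : ∀ v, M *ᵥ v = 0 → G *ᵥ v = 0) :
    G * P * M = G := by
  have hM : M * (1 - P * M) = 0 := by
    rw [Matrix.mul_sub, Matrix.mul_one, ← Matrix.mul_assoc, h.1, sub_self]
  have hG' : G * (1 - P * M) = 0 := by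
    refine ext_iff_mulVec.mpr fun v => ?_
    rw [← mulVec_mulVec, hG _ (by rw [mulVec_mulVec, hM, zero_mulVec]), zero_mulVec]
  rwa [Matrix.mul_sub, Matrix.mul_one, sub_eq_zero, eq_comm, ← Matrix.mul_assoc] at hG'

theorem IsPenrose.sub_mul_mul_transpose_sub {N : Matrix β β ℝ} {P : Matrix β β ℝ}
    (hP : IsPenrose N P) (hN : N.IsSymm) (hPs : P.IsSymm) {G : Matrix ι β ℝ}
    (hG : G * P * N = G) (K : Matrix β ι ℝ) :
    (G - Kᵀ * N) * P * (G - Kᵀ * N)ᵀ = G * P * Gᵀ - G * K - Kᵀ * Gᵀ + Kᵀ * N * K := by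
  have hNG : N * P * Gᵀ = Gᵀ := by
    simpa only [transpose_mul, hN.eq, hPs.eq, Matrix.mul_assoc] using congrArg (·ᵀ) hG
  have hGK : G * (P * (N * K)) = G * K := by
    rw [← Matrix.mul_assoc P N K, ← Matrix.mul_assoc G (P * N) K, ← Matrix.mul_assoc G P N, hG]
  have hKNG : Kᵀ * (N * (P * Gᵀ)) = Kᵀ * Gᵀ := by rw [← Matrix.mul_assoc N, hNG]
  have hKNK : Kᵀ * (N * (P * (N * K))) = Kᵀ * (N * K) := by
    rw [← Matrix.mul_assoc P N K, ← Matrix.mul_assoc N (P * N) K, ← Matrix.mul_assoc N P N, hP.1]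
  rw [transpose_sub, transpose_mul, transpose_transpose, hN.eq]
  simp only [Matrix.sub_mul, Matrix.mul_sub, Matrix.mul_assoc]
  rw [hGK, hKNG, hKNK]
  abel

theorem isPenrose_mpinv {M : Matrix α β ℝ} (h : ∃ P, IsPenrose M P) : IsPenrose M (mpinv M) := by
  unfold mpinv IsPenrose at *
  rw [dif_pos h]
  exact h.choose_spec

section Symmetric

variable [DecidableEq α]

theorem exists_isPenrose_of_isSymm {M : Matrix α α ℝ} (hM : M.IsSymm) :
    ∃ P, IsPenrose M P := by
  have mul_cfc (f g : ℝ → ℝ) : cfc f M * cfc g M = cfc (fun x => f x * g x) M :=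
    (cfc_mul f g M (M.finite_real_spectrum.continuousOn f)
      (M.finite_real_spectrum.continuousOn g)).symm
  have isSymm_cfc (f : ℝ → ℝ) : (cfc f M).IsSymm := isHermitian_iff_isSymm.mp IsSelfAdjoint.cfc
  have hM' : cfc id M = M := cfc_id ℝ M
  -- `x ↦ x⁻¹` (with `0⁻¹ = 0`) is a pseudoinverse on `ℝ`; the functional calculus transports this.
  set P := cfc (fun x : ℝ => x⁻¹) M
  refine ⟨P, ?_, ?_, ?_, ?_⟩
  · calc M * P * M = cfc id M * P * cfc id M := by rw [hM']
      _ = cfc id M := by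
        rw [mul_cfc, mul_cfc]
        exact congrArg (fun f : ℝ → ℝ => cfc f M) (funext mul_inv_mul_cancel)
      _ = M := hM'
  · calc P * M * P = P * cfc id M * P := by rw [hM']
      _ = P := by
        rw [mul_cfc, mul_cfc]
        exact congrArg (fun f : ℝ → ℝ => cfc f M)
          (funext fun x => by simpa using mul_inv_mul_cancel x⁻¹)
  · rw [← hM', mul_cfc]; exact isSymm_cfc _
  · rw [← hM', mul_cfc]; exact isSymm_cfc _

theorem isPenrose_mpinv_of_isSymm {M : Matrix α α ℝ} (hM : M.IsSymm) :
    IsPenrose M (mpinv M) :=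
  isPenrose_mpinv (exists_isPenrose_of_isSymm hM)

theorem isSymm_mpinv {M : Matrix α α ℝ} (hM : M.IsSymm) : (mpinv M).IsSymm := by
  have h := (isPenrose_mpinv_of_isSymm hM).transpose
  rw [hM.eq] at h
  exact h.unique (isPenrose_mpinv_of_isSymm hM)

end Symmetric

end Penrose

section Riccati

variable {ι κ : Type*} [Fintype ι] [Fintype κ] {A Q : Matrix ι ι ℝ} {B S : Matrix ι κ ℝ}
  {R : Matrix κ κ ℝ} {X Y Xo : Matrix ι ι ℝ}

theorem transpose_SX (hX : X.IsSymm) : (SX A B S X)ᵀ = Bᵀ * X * A + Sᵀ := by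
  simp only [SX, transpose_add, transpose_mul, transpose_transpose, hX.eq, Matrix.mul_assoc]

theorem isSymm_RX (hR : R.IsSymm) (hX : X.IsSymm) : (RX R B X).IsSymm := by
  simp only [IsSymm, RX, transpose_add, transpose_mul, transpose_transpose, hR.eq, hX.eq,
    Matrix.mul_assoc]

theorem SX_sub_transpose_mul_RX {K : Matrix κ ι ℝ} (hK : Kᵀ * RX R B Xo = SX A B S Xo)
    (Y : Matrix ι ι ℝ) :
    SX A B S Y - Kᵀ * RX R B Y = (A - B * K)ᵀ * (Y - Xo) * B := by
  have hK' : Kᵀ * R = Aᵀ * Xo * B + S - Kᵀ * Bᵀ * Xo * B := by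
    rw [← SX, ← hK, RX]; simp only [Matrix.mul_add, Matrix.mul_assoc]; abel
  simp only [SX, RX, transpose_sub, transpose_mul, Matrix.mul_add, Matrix.mul_sub, Matrix.sub_mul,
    hK']
  simp only [Matrix.mul_assoc]
  abel

variable [DecidableEq κ]

theorem SX_mul_mpinv_mul_RX (hR : R.IsSymm) (hX : X.IsSymm) (hker : KerCond A B S R X) :
    SX A B S X * mpinv (RX R B X) * RX R B X = SX A B S X :=
  (isPenrose_mpinv_of_isSymm (isSymm_RX hR hX)).mul_mul_eq_of_ker hker

theorem transpose_KX_mul_RX (hR : R.IsSymm) (hX : X.IsSymm) (hker : KerCond A B S R X) :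
    (KX A B S R X)ᵀ * RX R B X = SX A B S X := by
  rw [KX, transpose_mul, transpose_transpose, (isSymm_mpinv (isSymm_RX hR hX)).eq]
  exact SX_mul_mpinv_mul_RX hR hX hker

theorem ricc_eq_closedLoop (hR : R.IsSymm) (hX : X.IsSymm) (hker : KerCond A B S R X)
    (K : Matrix κ ι ℝ) :
    Ricc A Q B S R X = (A - B * K)ᵀ * X * (A - B * K) + (Q - S * K - Kᵀ * Sᵀ + Kᵀ * R * K) -
      (SX A B S X - Kᵀ * RX R B X) * mpinv (RX R B X) * (SX A B S X - Kᵀ * RX R B X)ᵀ := by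
  have hRX := isSymm_RX (B := B) hR hX
  rw [(isPenrose_mpinv_of_isSymm hRX).sub_mul_mul_transpose_sub hRX (isSymm_mpinv hRX)
    (SX_mul_mpinv_mul_RX hR hX hker), Ricc, transpose_SX hX]
  simp only [SX, RX, transpose_sub, transpose_mul, Matrix.mul_sub, Matrix.sub_mul,
    Matrix.mul_add, Matrix.add_mul, Matrix.mul_assoc]
  abel

variable [DecidableEq ι]

theorem ricc_sub_eq (hR : R.IsSymm) (hXo : IsCGDARESolution A Q B S R Xo) (hY : Y.IsSymm)
    (hkerY : KerCond A B S R Y) :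
    Ricc A Q B S R Y - Xo = (AX A B S R Xo)ᵀ * (1 - (Y - Xo) * B * mpinv (RX R B Y) * Bᵀ) *
      (Y - Xo) * AX A B S R Xo := by
  obtain ⟨hXoS, hXoFix, hXoKer⟩ := hXo
  set K := KX A B S R Xo
  have hK : Kᵀ * RX R B Xo = SX A B S Xo := transpose_KX_mul_RX hR hXoS hXoKer
  have hXoLoop := ricc_eq_closedLoop (Q := Q) hR hXoS hXoKer K
  simp only [hK, sub_self, Matrix.zero_mul, sub_zero] at hXoLoop
  have hW : ((A - B * K)ᵀ * (Y - Xo) * B)ᵀ = Bᵀ * (Y - Xo) * (A - B * K) := by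
    rw [transpose_mul, transpose_mul, transpose_transpose, (hY.sub hXoS).eq, Matrix.mul_assoc]
  calc Ricc A Q B S R Y - Xo = Ricc A Q B S R Y - Ricc A Q B S R Xo := by rw [← hXoFix]
    _ = (A - B * K)ᵀ * (Y - Xo) * (A - B * K) -
          ((A - B * K)ᵀ * (Y - Xo) * B) * mpinv (RX R B Y) * ((A - B * K)ᵀ * (Y - Xo) * B)ᵀ := by
        rw [ricc_eq_closedLoop hR hY hkerY K, hXoLoop, SX_sub_transpose_mul_RX hK,
          Matrix.mul_sub _ Y Xo, Matrix.sub_mul _ _ (A - B * K)]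
        abel
    _ = (A - B * K)ᵀ * (1 - (Y - Xo) * B * mpinv (RX R B Y) * Bᵀ) * (Y - Xo) * (A - B * K) := by
        rw [hW, Matrix.mul_sub _ 1, Matrix.mul_one, Matrix.sub_mul, Matrix.sub_mul]
        simp only [Matrix.mul_assoc]

end Riccati

theorem backward_iterate_eq_prod_mul_pow {M : Type*} [Monoid M] (D F : ℕ → M) (a : M) (T : ℕ)
    (h : ∀ t < T, D t = F (t + 1) * D (t + 1) * a) (τ : ℕ) (hτ : τ ≤ T) :
    D (T - τ) = ((List.range τ).map fun i => F (T - τ + 1 + i)).prod * D T * a ^ τ := by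
  induction τ with
  | zero => simp
  | succ τ ih =>
    have hidx : T - (τ + 1) + 1 = T - τ := by omega
    have hshift : (fun i => F (T - τ + i)) ∘ Nat.succ = fun i => F (T - τ + 1 + i) := by
      funext i; simp only [Function.comp_apply, Nat.succ_eq_add_one, Nat.add_assoc, Nat.add_comm 1]
    rw [h _ (by omega), hidx, ih (by omega), List.range_succ_eq_map, List.map_cons, List.map_map,
      hshift, List.prod_cons, add_zero, pow_succ]
    simp only [mul_assoc]

theorem stmt_16_general {n m : ℕ}
    (A Q : Matrix (Fin n) (Fin n) ℝ) (B S : Matrix (Fin n) (Fin m) ℝ)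
    (R : Matrix (Fin m) (Fin m) ℝ)
    (hPi : (fromBlocks Q S Sᵀ R).PosSemidef)
    (Xo : Matrix (Fin n) (Fin n) ℝ) (hXo : IsCGDARESolution A Q B S R Xo)
    (T : ℕ) (X : ℕ → Matrix (Fin n) (Fin n) ℝ)
    (hsymm : ∀ t ≤ T, (X t)ᵀ = X t)
    (hrec : ∀ t < T, X t = Ricc A Q B S R (X (t + 1)))
    (hker : ∀ t ≤ T, KerCond A B S R (X t)) :
    ∀ τ : ℕ, 1 ≤ τ → τ ≤ T →
      X (T - τ) - Xo =
        ((List.range τ).map (fun i =>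
            (AX A B S R Xo)ᵀ *
              (1 - (X (T - τ + 1 + i) - Xo) * B *
                mpinv (R + Bᵀ * X (T - τ + 1 + i) * B) * Bᵀ))).prod *
          (X T - Xo) * (AX A B S R Xo) ^ τ := by
  have hR : R.IsSymm := isHermitian_iff_isSymm.mp (isHermitian_fromBlocks_iff.mp hPi.1).2.2.2
  intro τ _ hτ
  refine backward_iterate_eq_prod_mul_pow (fun t => X t - Xo)
    (fun t => (AX A B S R Xo)ᵀ * (1 - (X t - Xo) * B * mpinv (R + Bᵀ * X t * B) * Bᵀ))
    (AX A B S R Xo) T (fun t ht => ?_) τ hτ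
  rw [hrec t ht]
  exact ricc_sub_eq hR hXo (hsymm _ ht) (hker _ ht)

/-- backward product formula
`Δ_{T-τ} = F_{T-τ+1} ⋯ F_T · Δ_T · (A_{X∘})^τ` for the generalised Riccati difference
equation, where `F_i = A_{X∘}ᵀ (I - Δ_i B (R + BᵀX_iB)† Bᵀ)` and `Δ_i = X_i - X∘`. -/
theorem stmt_16 {n m : ℕ} (hn : 0 < n) (hm : 0 < m)
    (A Q : Matrix (Fin n) (Fin n) ℝ) (B S : Matrix (Fin n) (Fin m) ℝ)
    (R : Matrix (Fin m) (Fin m) ℝ)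
    (hPi : (fromBlocks Q S Sᵀ R).PosSemidef)
    (Xo : Matrix (Fin n) (Fin n) ℝ) (hXo : IsCGDARESolution A Q B S R Xo)
    (T : ℕ) (hT : 1 ≤ T) (X : ℕ → Matrix (Fin n) (Fin n) ℝ)
    (hsymm : ∀ t ≤ T, (X t)ᵀ = X t)
    (hrec : ∀ t < T, X t = Ricc A Q B S R (X (t + 1)))
    (hker : ∀ t ≤ T, KerCond A B S R (X t)) :
    ∀ τ : ℕ, 1 ≤ τ → τ ≤ T →
      X (T - τ) - Xo =
        ((List.range τ).map (fun i =>
            (AX A B S R Xo)ᵀ *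
              (1 - (X (T - τ + 1 + i) - Xo) * B *
                mpinv (R + Bᵀ * X (T - τ + 1 + i) * B) * Bᵀ))).prod *
          (X T - Xo) * (AX A B S R Xo) ^ τ :=
  stmt_16_general A Q B S R hPi Xo hXo T X hsymm hrec hker
end
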